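/- arXiv:2503.18917 — 2 statements merged into one kernel-verified Lean document; each statement's English description precedes it below -/
import Mathlib

section
/- Assume f: Ω × ℝ^{m×n} → [0,∞) is a Carathéodory function, convex and C¹ in ξ (assumption (A1)), and that there exists g: Ω × [0,∞)ⁿ → [0,∞) with f(x,ξ) = g(x,|ξ_1|,…,|ξ_n|) for a.e. x ∈ Ω and every ξ ∈ ℝ^{m×n} (assumption (A2)). Then for a.e. x ∈ Ω the map (t_1,…,t_n) ↦ g(x,t_1,…,t_n) is of class C¹ on [0,∞)ⁿ. -/
open MeasureTheory Metric Set
open scoped ENNReal Topology NNReal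

noncomputable section

/-- The Euclidean (Frobenius) norm of a matrix `ξ ∈ ℝ^{m×n}`,
viewed as the `n`-tuple of its columns `ξ i ∈ ℝ^m`. -/
def matNorm {m n : ℕ} (ξ : Fin n → EuclideanSpace ℝ (Fin m)) : ℝ :=
  Real.sqrt (∑ i, ‖ξ i‖ ^ 2)

/-- `Dw` is the weak (distributional) gradient of the scalar function `w` on the open set `Ω`:
integration by parts against smooth compactly supported test functions holds, and both `w`
and `Dw` are locally integrable on `Ω`. -/
def IsWeakDerivS {n : ℕ} (Ω : Set (EuclideanSpace ℝ (Fin n)))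
    (w : EuclideanSpace ℝ (Fin n) → ℝ)
    (Dw : EuclideanSpace ℝ (Fin n) → Fin n → ℝ) : Prop :=
  LocallyIntegrableOn w Ω volume ∧
  (∀ i, LocallyIntegrableOn (fun x => Dw x i) Ω volume) ∧
  ∀ φ : EuclideanSpace ℝ (Fin n) → ℝ, ContDiff ℝ (⊤ : ℕ∞) φ → HasCompactSupport φ →
    tsupport φ ⊆ Ω → ∀ i,
      ∫ x in Ω, w x * fderiv ℝ φ x (EuclideanSpace.single i 1) =
        - ∫ x in Ω, Dw x i * φ x

/-- `Du` is the weak gradient of the vector-valued `u : Ω → ℝ^m` (componentwise);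
`Du x i` is the `i`-th column of the gradient matrix, i.e. `∂_{x_i} u (x) ∈ ℝ^m`. -/
def IsWeakDeriv {n m : ℕ} (Ω : Set (EuclideanSpace ℝ (Fin n)))
    (u : EuclideanSpace ℝ (Fin n) → EuclideanSpace ℝ (Fin m))
    (Du : EuclideanSpace ℝ (Fin n) → Fin n → EuclideanSpace ℝ (Fin m)) : Prop :=
  ∀ α : Fin m, IsWeakDerivS Ω (fun x => u x α) (fun x i => Du x i α)

/-- `u ∈ W^{1,1}(Ω; ℝ^m)` with weak gradient `Du`. -/
def MemW11 {n m : ℕ} (Ω : Set (EuclideanSpace ℝ (Fin n)))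
    (u : EuclideanSpace ℝ (Fin n) → EuclideanSpace ℝ (Fin m))
    (Du : EuclideanSpace ℝ (Fin n) → Fin n → EuclideanSpace ℝ (Fin m)) : Prop :=
  IsWeakDeriv Ω u Du ∧ IntegrableOn u Ω volume ∧
    ∀ i, IntegrableOn (fun x => Du x i) Ω volume

/-- `supp φ ⋐ Ω`. -/
def CptSuppIn {n m : ℕ} (Ω : Set (EuclideanSpace ℝ (Fin n)))
    (φ : EuclideanSpace ℝ (Fin n) → EuclideanSpace ℝ (Fin m)) : Prop :=
  IsCompact (closure (Function.support φ)) ∧ closure (Function.support φ) ⊆ Ω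

/-- `u` is a local minimizer of `v ↦ ∫_Ω f(x, Dv) dx`: it belongs to
`W^{1,F}(Ω;ℝ^m)` and `F(u) ≤ F(u + φ)` for every `φ ∈ W^{1,F}(Ω;ℝ^m)` with `supp φ ⋐ Ω`. -/
def IsLocalMinimizer {n m : ℕ} (Ω : Set (EuclideanSpace ℝ (Fin n)))
    (f : EuclideanSpace ℝ (Fin n) → (Fin n → EuclideanSpace ℝ (Fin m)) → ℝ)
    (u : EuclideanSpace ℝ (Fin n) → EuclideanSpace ℝ (Fin m))
    (Du : EuclideanSpace ℝ (Fin n) → Fin n → EuclideanSpace ℝ (Fin m)) : Prop :=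
  MemW11 Ω u Du ∧ IntegrableOn (fun x => f x (Du x)) Ω volume ∧
  ∀ φ Dφ, MemW11 Ω φ Dφ → IntegrableOn (fun x => f x (Dφ x)) Ω volume →
    CptSuppIn Ω φ →
    IntegrableOn (fun x => f x (fun i => Du x i + Dφ x i)) Ω volume →
    ∫ x in Ω, f x (Du x) ≤ ∫ x in Ω, f x (fun i => Du x i + Dφ x i)

/-- `σ_i = p_i r_i / (r_i + 1)` if `r_i < ∞`, and `σ_i = p_i` if `r_i = ∞`. -/
def sigmaExp {n : ℕ} (p : Fin n → ℝ) (r : Fin n → ℝ≥0∞) (i : Fin n) : ℝ :=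
  if r i = ∞ then p i else p i * (r i).toReal / ((r i).toReal + 1)

/-- The harmonic mean: `1/harm a = (1/n) ∑ 1/(a i)`. -/
def harm {n : ℕ} (a : Fin n → ℝ) : ℝ := n / ∑ i, (a i)⁻¹

/-- `1/(p̄r̄) = (1/n) ∑ 1/(p_i r_i)`, with the convention `1/∞ = 0`. -/
def invPR {n : ℕ} (p : Fin n → ℝ) (r : Fin n → ℝ≥0∞) : ℝ :=
  (∑ i, if r i = ∞ then 0 else (p i * (r i).toReal)⁻¹) / n

/-- `1/(qs)`, with the convention `1/∞ = 0`. -/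
def invQS (q : ℝ) (s : ℝ≥0∞) : ℝ := if s = ∞ then 0 else (q * s.toReal)⁻¹

/-- The conjugate exponent `s' = s/(s-1)` (`= 1` if `s = ∞`). -/
def sConj (s : ℝ≥0∞) : ℝ := if s = ∞ then 1 else s.toReal / (s.toReal - 1)

/-- `v ∈ W_0^{1,1}(Ω;ℝ^m)` with weak gradient `Dv`, formalized via the extension by zero:
the (extended) function is in `W^{1,1}(ℝⁿ;ℝ^m)` and vanishes outside `Ω`. -/
def MemW011 {n m : ℕ} (Ω : Set (EuclideanSpace ℝ (Fin n)))
    (v : EuclideanSpace ℝ (Fin n) → EuclideanSpace ℝ (Fin m))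
    (Dv : EuclideanSpace ℝ (Fin n) → Fin n → EuclideanSpace ℝ (Fin m)) : Prop :=
  MemW11 Set.univ v Dv ∧ ∀ x, x ∉ Ω → v x = 0


/-- **Lemma 3.1 (i).** Under (A1) and (A2), for a.e. x the function g(x,·) is of class C¹
on the nonnegative orthant [0,∞)ⁿ. -/
theorem g_is_C1_on_orthant
    {n m : ℕ} (hn : 2 ≤ n) (hm : 1 ≤ m)
    (Ω : Set (EuclideanSpace ℝ (Fin n))) (hΩo : IsOpen Ω) (hΩb : Bornology.IsBounded Ω)
    (f : EuclideanSpace ℝ (Fin n) → (Fin n → EuclideanSpace ℝ (Fin m)) → ℝ)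
    (g : EuclideanSpace ℝ (Fin n) → (Fin n → ℝ) → ℝ)
    (hf_meas : ∀ ξ, AEStronglyMeasurable (fun x => f x ξ) (volume.restrict Ω))
    (hf_nonneg : ∀ᵐ x ∂volume.restrict Ω, ∀ ξ, 0 ≤ f x ξ)
    (hg_nonneg : ∀ᵐ x ∂volume.restrict Ω, ∀ t : Fin n → ℝ, (∀ i, 0 ≤ t i) → 0 ≤ g x t)
    -- (A1)
    (hA1 : ∀ᵐ x ∂volume.restrict Ω, ConvexOn ℝ Set.univ (f x) ∧ ContDiff ℝ 1 (f x))
    -- (A2)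
    (hA2 : ∀ᵐ x ∂volume.restrict Ω, ∀ ξ, f x ξ = g x fun i => ‖ξ i‖) :
    ∀ᵐ x ∂volume.restrict Ω, ContDiffOn ℝ 1 (g x) {t : Fin n → ℝ | ∀ i, 0 ≤ t i} := by
  -- fix a unit vector e ∈ ℝ^m
  set e : EuclideanSpace ℝ (Fin m) := EuclideanSpace.single ⟨0, hm⟩ 1 with he
  have he1 : ‖e‖ = 1 := by
    rw [he, EuclideanSpace.norm_single]; norm_num
  filter_upwards [hA1, hA2] with x hx1 hx2
  obtain ⟨-, hC1⟩ := hx1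
  -- the linear substitution t ↦ (fun i => t i • e) is smooth
  have hL : ContDiff ℝ 1 (fun t : Fin n → ℝ => fun i => t i • e) := by
    apply contDiff_pi.mpr
    intro i
    exact (contDiff_apply ℝ ℝ i).smul contDiff_const
  have hcomp : ContDiff ℝ 1 (fun t : Fin n → ℝ => f x (fun i => t i • e)) :=
    hC1.comp hL
  refine hcomp.contDiffOn.congr ?_
  intro t ht
  have := hx2 (fun i => t i • e)
  rw [this]
  congr 1
  funext i
  rw [norm_smul, he1, mul_one, Real.norm_eq_abs, abs_of_nonneg (ht i)]

end
end

section
/- Assume f: Ω × ℝ^{m×n} → [0,∞) is a Carathéodory function satisfying (A1) (convex and C¹ in ξ), (A2) (f(x,ξ) = g(x,|ξ_1|,…,|ξ_n|)), and (A3) (there is τ ≥ 1 with f(x,tξ) ≤ t^τ f(x,ξ) for all t > 1), and let u be a local minimizer of F(v) = ∫_Ω f(x,Dv) dx. Then the Euler equation holds: ∫_Ω Σ_{i=1}^n Σ_{α=1}^m (∂f/∂ξ_i^α)(x,Du) φ_{x_i}^α dx = 0 for every φ ∈ W^{1,F}(Ω;ℝ^m) with supp φ ⋐ Ω. -/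
open MeasureTheory Metric Set
open scoped ENNReal Topology NNReal

noncomputable section

lemma pi_single_expand {n m : ℕ} (w : Fin n → EuclideanSpace ℝ (Fin m)) :
    ∑ i, ∑ α, w i α • (Pi.single i (EuclideanSpace.single α (1:ℝ)) :
      Fin n → EuclideanSpace ℝ (Fin m)) = w := by
  funext j
  refine PiLp.ext fun β => ?_
  simp only [Finset.sum_apply, Pi.single_apply, EuclideanSpace.single_apply,
    PiLp.smul_apply, Pi.smul_apply, smul_eq_mul]
  simp [apply_ite, Finset.sum_ite_eq', mul_ite, Finset.sum_apply,
    EuclideanSpace.single_apply, PiLp.smul_apply, smul_eq_mul]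
  simp [Pi.single_apply]

lemma clm_expand {n m : ℕ} (L : (Fin n → EuclideanSpace ℝ (Fin m)) →L[ℝ] ℝ)
    (w : Fin n → EuclideanSpace ℝ (Fin m)) :
    ∑ i, ∑ α, L (Pi.single i (EuclideanSpace.single α (1:ℝ))) * w i α = L w := by
  conv_rhs => rw [← pi_single_expand w]
  rw [map_sum]
  refine Finset.sum_congr rfl fun i _ => ?_
  rw [map_sum]
  exact Finset.sum_congr rfl fun α _ => by rw [L.map_smul, smul_eq_mul, mul_comm]

lemma aesm_comp {n m : ℕ} {μ : Measure (EuclideanSpace ℝ (Fin n))}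
    {f : EuclideanSpace ℝ (Fin n) → (Fin n → EuclideanSpace ℝ (Fin m)) → ℝ}
    (hf : ∀ ξ, AEStronglyMeasurable (fun x => f x ξ) μ)
    (hc : ∀ᵐ x ∂μ, Continuous (f x))
    {v : EuclideanSpace ℝ (Fin n) → (Fin n → EuclideanSpace ℝ (Fin m))}
    (hv : AEStronglyMeasurable v μ) :
    AEStronglyMeasurable (fun x => f x (v x)) μ := by
  obtain ⟨v', hv', hvv'⟩ := hv
  have hsimp : ∀ s : SimpleFunc (EuclideanSpace ℝ (Fin n)) (Fin n → EuclideanSpace ℝ (Fin m)),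
      AEStronglyMeasurable (fun x => f x (s x)) μ := by
    intro s
    have heq : (fun x => f x (s x))
        = fun x => ∑ c ∈ s.range, (s ⁻¹' {c}).indicator (fun y => f y c) x := by
      funext x
      rw [Finset.sum_eq_single_of_mem (s x) (s.mem_range_self x)]
      · rw [Set.indicator_of_mem (by simp : x ∈ s ⁻¹' {s x})]
      · intro c _ hcne
        exact Set.indicator_of_notMem (fun h => hcne (Set.mem_singleton_iff.mp (Set.mem_preimage.mp h)).symm) _
    rw [heq]
    exact Finset.aestronglyMeasurable_fun_sum _ fun c _ => (hf c).indicator (s.measurableSet_fiber c)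
  have h1 : ∀ k, AEStronglyMeasurable (fun x => f x (hv'.approx k x)) μ := fun k => hsimp _
  have h2 : ∀ᵐ x ∂μ, Filter.Tendsto (fun k => f x (hv'.approx k x)) Filter.atTop (𝓝 (f x (v' x))) :=
    hc.mono fun x hx => ((hx.tendsto (v' x)).comp (hv'.tendsto_approx x))
  exact (aestronglyMeasurable_of_tendsto_ae Filter.atTop h1 h2).congr
    (hvv'.mono fun x hx => congrArg (f x) hx.symm)

lemma isWeakDerivS_const_mul {n : ℕ} {Ω : Set (EuclideanSpace ℝ (Fin n))}
    {w : EuclideanSpace ℝ (Fin n) → ℝ} {Dw : EuclideanSpace ℝ (Fin n) → Fin n → ℝ}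
    (c : ℝ) (h : IsWeakDerivS Ω w Dw) :
    IsWeakDerivS Ω (fun x => c * w x) (fun x i => c * Dw x i) := by
  obtain ⟨h1, h2, h3⟩ := h
  refine ⟨fun x hx => ?_, fun i x hx => ?_, ?_⟩
  · obtain ⟨t, ht, hint⟩ := h1 x hx
    exact ⟨t, ht, hint.const_mul c⟩
  · obtain ⟨t, ht, hint⟩ := h2 i x hx
    exact ⟨t, ht, hint.const_mul c⟩
  · intro ψ hψ1 hψ2 hψ3 i
    have key := h3 ψ hψ1 hψ2 hψ3 i
    simp_rw [mul_assoc, integral_const_mul, key, mul_neg]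

lemma memW11_smul {n m : ℕ} {Ω : Set (EuclideanSpace ℝ (Fin n))}
    {φ : EuclideanSpace ℝ (Fin n) → EuclideanSpace ℝ (Fin m)}
    {Dφ : EuclideanSpace ℝ (Fin n) → Fin n → EuclideanSpace ℝ (Fin m)} (c : ℝ)
    (h : MemW11 Ω φ Dφ) :
    MemW11 Ω (fun x => c • φ x) (fun x i => c • Dφ x i) := by
  obtain ⟨hw, hint, hDint⟩ := h
  refine ⟨fun α => ?_, ?_, fun i => ?_⟩
  · exact isWeakDerivS_const_mul c (hw α)
  · exact hint.smul c
  · exact (hDint i).smul c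

set_option maxHeartbeats 2000000 in
/-- **Proposition 4.1 (Euler's equation).** If u is a local minimizer of
F(v) = ∫_Ω f(x,Dv) dx under (A1)–(A3), then
∫_Ω Σ_i Σ_α (∂f/∂ξ_i^α)(x,Du) φ_{x_i}^α dx = 0 for every φ ∈ W^{1,F}(Ω;ℝ^m)
with supp φ ⋐ Ω. -/
theorem euler_equation
    {n m : ℕ} (hn : 2 ≤ n) (hm : 1 ≤ m)
    (Ω : Set (EuclideanSpace ℝ (Fin n))) (hΩo : IsOpen Ω) (hΩb : Bornology.IsBounded Ω)
    (f : EuclideanSpace ℝ (Fin n) → (Fin n → EuclideanSpace ℝ (Fin m)) → ℝ)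
    (hf_meas : ∀ ξ, AEStronglyMeasurable (fun x => f x ξ) (volume.restrict Ω))
    (hf_nonneg : ∀ᵐ x ∂volume.restrict Ω, ∀ ξ, 0 ≤ f x ξ)
    -- (A1)
    (hA1 : ∀ᵐ x ∂volume.restrict Ω, ConvexOn ℝ Set.univ (f x) ∧ ContDiff ℝ 1 (f x))
    -- (A2)
    (hA2 : ∃ g : EuclideanSpace ℝ (Fin n) → (Fin n → ℝ) → ℝ,
      (∀ᵐ x ∂volume.restrict Ω, ∀ t : Fin n → ℝ, (∀ i, 0 ≤ t i) → 0 ≤ g x t) ∧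
      ∀ᵐ x ∂volume.restrict Ω, ∀ ξ, f x ξ = g x fun i => ‖ξ i‖)
    -- (A3)
    (τ : ℝ) (hτ : 1 ≤ τ)
    (hA3 : ∀ᵐ x ∂volume.restrict Ω, ∀ t : ℝ, 1 < t → ∀ ξ, f x (t • ξ) ≤ t ^ τ * f x ξ)
    -- the local minimizer
    (u : EuclideanSpace ℝ (Fin n) → EuclideanSpace ℝ (Fin m))
    (Du : EuclideanSpace ℝ (Fin n) → Fin n → EuclideanSpace ℝ (Fin m))
    (hu : IsLocalMinimizer Ω f u Du)
    -- the test function φ ∈ W^{1,F}(Ω;ℝ^m), supp φ ⋐ Ω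
    (φ : EuclideanSpace ℝ (Fin n) → EuclideanSpace ℝ (Fin m))
    (Dφ : EuclideanSpace ℝ (Fin n) → Fin n → EuclideanSpace ℝ (Fin m))
    (hφ : MemW11 Ω φ Dφ)
    (hφF : IntegrableOn (fun x => f x (Dφ x)) Ω volume)
    (hφsupp : CptSuppIn Ω φ) :
    IntegrableOn (fun x => ∑ i, ∑ α,
      fderiv ℝ (f x) (Du x) (Pi.single i (EuclideanSpace.single α (1:ℝ))) * Dφ x i α)
      Ω volume ∧
    ∫ x in Ω, (∑ i, ∑ α,
      fderiv ℝ (f x) (Du x) (Pi.single i (EuclideanSpace.single α (1:ℝ))) * Dφ x i α) = 0 := by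
  classical
  obtain ⟨⟨hDuWeak, hu_int, hDu_int⟩, hFu, hmin⟩ := hu
  obtain ⟨g, hg0, hgf⟩ := hA2
  have hcont : ∀ᵐ x ∂(volume.restrict Ω), Continuous (f x) :=
    hA1.mono fun x hx => hx.2.continuous
  have hae : ∀ᵐ x ∂(volume.restrict Ω),
      (∀ ξ, 0 ≤ f x ξ) ∧ ConvexOn ℝ Set.univ (f x) ∧ ContDiff ℝ 1 (f x) ∧
      (∀ ξ, f x ξ = g x fun i => ‖ξ i‖) ∧
      (∀ t : ℝ, 1 < t → ∀ ξ, f x (t • ξ) ≤ t ^ τ * f x ξ) := by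
    filter_upwards [hf_nonneg, hA1, hgf, hA3] with x h1 h2 h3 h4
    exact ⟨h1, h2.1, h2.2, h3, h4⟩
  have pi_aesm : ∀ V : EuclideanSpace ℝ (Fin n) → (Fin n → EuclideanSpace ℝ (Fin m)),
      (∀ i, AEStronglyMeasurable (fun x => V x i) (volume.restrict Ω)) →
      AEStronglyMeasurable V (volume.restrict Ω) := by
    intro V hV
    choose W hW hWE using fun i => (hV i).aemeasurable
    rw [aestronglyMeasurable_iff_aemeasurable]
    refine ⟨fun x i => W i x, measurable_pi_iff.mpr fun i => hW i, ?_⟩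
    filter_upwards [MeasureTheory.ae_all_iff.mpr hWE] with x hx
    funext i
    exact hx i
  have hDu_aesm : AEStronglyMeasurable Du (volume.restrict Ω) :=
    pi_aesm Du fun i => (hDu_int i).aestronglyMeasurable
  -- The key step: for every admissible test function `ψ`, the directional derivative of `F`
  -- at `u` in direction `ψ` is integrable and nonnegative.
  have key : ∀ (ψ : EuclideanSpace ℝ (Fin n) → EuclideanSpace ℝ (Fin m))
      (Dψ : EuclideanSpace ℝ (Fin n) → Fin n → EuclideanSpace ℝ (Fin m)),
      MemW11 Ω ψ Dψ → IntegrableOn (fun x => f x (Dψ x)) Ω volume → CptSuppIn Ω ψ →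
      Integrable (fun x => fderiv ℝ (f x) (Du x) (Dψ x)) (volume.restrict Ω) ∧
      0 ≤ ∫ x in Ω, fderiv ℝ (f x) (Du x) (Dψ x) := by
    intro ψ Dψ hψW hψF hψsupp
    have hDψ_aesm : AEStronglyMeasurable Dψ (volume.restrict Ω) :=
      pi_aesm Dψ fun i => (hψW.2.2 i).aestronglyMeasurable
    set c2 : ℝ := (2:ℝ) ^ τ with hc2
    have hc2_nonneg : (0:ℝ) ≤ c2 := Real.rpow_nonneg (by norm_num) τ
    have haeB : ∀ᵐ x ∂(volume.restrict Ω), ∀ a : ℝ, a = 1 ∨ a = -1 →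
        f x (Du x + a • Dψ x) ≤ c2 * (f x (Du x) + f x (Dψ x)) := by
      filter_upwards [hae] with x hx
      obtain ⟨hx0, hxc, hxd, hxg, hx3⟩ := hx
      intro a ha
      have hsym : ∀ ξ : Fin n → EuclideanSpace ℝ (Fin m), f x (-ξ) = f x ξ := by
        intro ξ; rw [hxg, hxg]
        congr 1; funext i; simp
      have h2ξ : ∀ ξ, f x ((2:ℝ) • ξ) ≤ c2 * f x ξ := fun ξ => hx3 2 one_lt_two ξ
      have hmid : Du x + a • Dψ x
          = (1/2 : ℝ) • ((2:ℝ) • Du x) + (1/2 : ℝ) • ((2:ℝ) • (a • Dψ x)) := by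
        module
      have hconv := hxc.2 (Set.mem_univ ((2:ℝ) • Du x))
        (Set.mem_univ ((2:ℝ) • (a • Dψ x))) (by norm_num : (0:ℝ) ≤ 1/2)
        (by norm_num : (0:ℝ) ≤ 1/2) (by norm_num : (1/2:ℝ) + 1/2 = 1)
      rw [hmid]
      refine le_trans hconv ?_
      have h2a : f x ((2:ℝ) • (a • Dψ x)) ≤ c2 * f x (Dψ x) := by
        rcases ha with rfl | rfl
        · simpa using h2ξ (Dψ x)
        · have hneg : (2:ℝ) • ((-1:ℝ) • Dψ x) = -((2:ℝ) • Dψ x) := by module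
          rw [hneg, hsym]
          exact h2ξ (Dψ x)
      have h2u := h2ξ (Du x)
      have := hx0 (Du x); have := hx0 (Dψ x)
      simp only [smul_eq_mul]
      nlinarith
    have hsum_int : ∀ a : ℝ, a = 1 ∨ a = -1 →
        Integrable (fun x => f x (Du x + a • Dψ x)) (volume.restrict Ω) := by
      intro a ha
      have hmeas : AEStronglyMeasurable (fun x => f x (Du x + a • Dψ x))
          (volume.restrict Ω) :=
        aesm_comp hf_meas hcont (hDu_aesm.add (hDψ_aesm.const_smul a))
      refine Integrable.mono' ((hFu.add hψF).const_mul c2) hmeas ?_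
      filter_upwards [haeB, hf_nonneg] with x hx hx0
      rw [Real.norm_of_nonneg (hx0 _)]
      exact hx a ha
    have hmin' : ∀ ε : ℝ, 0 < ε → ε ≤ 1 →
        Integrable (fun x => f x (Du x + ε • Dψ x)) (volume.restrict Ω) ∧
        ∫ x in Ω, f x (Du x) ≤ ∫ x in Ω, f x (Du x + ε • Dψ x) := by
      intro ε hε0 hε1
      have hconv_bound : ∀ᵐ x ∂(volume.restrict Ω),
          f x (Du x + ε • Dψ x) ≤ f x (Du x) + f x (Du x + (1:ℝ) • Dψ x) := by
        filter_upwards [hae] with x hx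
        obtain ⟨hx0, hxc, _, _, _⟩ := hx
        have hmid : Du x + ε • Dψ x
            = (1 - ε) • Du x + ε • (Du x + (1:ℝ) • Dψ x) := by module
        have hconv := hxc.2 (Set.mem_univ (Du x))
          (Set.mem_univ (Du x + (1:ℝ) • Dψ x)) (by linarith : (0:ℝ) ≤ 1 - ε)
          (le_of_lt hε0) (by ring : (1 - ε) + ε = 1)
        rw [hmid]
        refine le_trans hconv ?_
        have := hx0 (Du x); have := hx0 (Du x + (1:ℝ) • Dψ x)
        simp only [smul_eq_mul]
        nlinarith
      have hint_ε : Integrable (fun x => f x (Du x + ε • Dψ x)) (volume.restrict Ω) := by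
        have hmeas := aesm_comp hf_meas hcont (hDu_aesm.add (hDψ_aesm.const_smul ε))
        refine Integrable.mono' (hFu.add (hsum_int 1 (Or.inl rfl))) hmeas ?_
        filter_upwards [hconv_bound, hf_nonneg] with x hx hx0
        rw [Real.norm_of_nonneg (hx0 _)]
        exact hx
      have hεψ_int : Integrable (fun x => f x (fun i => ε • Dψ x i))
          (volume.restrict Ω) := by
        have hmeas : AEStronglyMeasurable (fun x => f x (fun i => ε • Dψ x i))
            (volume.restrict Ω) := aesm_comp hf_meas hcont (hDψ_aesm.const_smul ε)
        refine Integrable.mono' (hFu.add hψF) hmeas ?_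
        filter_upwards [hae] with x hx
        obtain ⟨hx0, hxc, _, hxg, _⟩ := hx
        have hsym : f x (-(Du x)) = f x (Du x) := by
          rw [hxg, hxg]; congr 1; funext i; simp
        have h0le : f x 0 ≤ f x (Du x) := by
          have h0 : (0 : Fin n → EuclideanSpace ℝ (Fin m))
              = (1/2:ℝ) • Du x + (1/2:ℝ) • (-(Du x)) := by module
          calc f x 0 = f x ((1/2:ℝ) • Du x + (1/2:ℝ) • (-(Du x))) := by rw [← h0]
            _ ≤ (1/2:ℝ) * f x (Du x) + (1/2:ℝ) * f x (-(Du x)) := by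
                have := hxc.2 (Set.mem_univ (Du x)) (Set.mem_univ (-(Du x)))
                  (by norm_num : (0:ℝ) ≤ 1/2) (by norm_num : (0:ℝ) ≤ 1/2)
                  (by norm_num : (1/2:ℝ) + 1/2 = 1)
                simpa using this
            _ = f x (Du x) := by rw [hsym]; ring
        have hεd : (fun i => ε • Dψ x i)
            = (1 - ε) • (0 : Fin n → EuclideanSpace ℝ (Fin m)) + ε • Dψ x := by
          funext i; simp
        have hconv := hxc.2 (Set.mem_univ (0 : Fin n → EuclideanSpace ℝ (Fin m)))
          (Set.mem_univ (Dψ x)) (by linarith : (0:ℝ) ≤ 1 - ε)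
          (le_of_lt hε0) (by ring : (1 - ε) + ε = 1)
        rw [Real.norm_of_nonneg (hx0 _), hεd]
        simp only [Pi.add_apply]
        refine le_trans hconv ?_
        have hdψ := hx0 (Dψ x); have h00 := hx0 (0 : Fin n → EuclideanSpace ℝ (Fin m))
        simp only [smul_eq_mul]
        nlinarith [mul_nonneg (le_of_lt hε0) h00,
          mul_nonneg (by linarith : (0:ℝ) ≤ 1 - ε) hdψ]
      have hsupp : CptSuppIn Ω (fun x => ε • ψ x) := by
        have hsub : Function.support (fun x => ε • ψ x) ⊆ Function.support ψ := by
          intro x hx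
          simp only [Function.mem_support] at hx ⊢
          intro h0; exact hx (by rw [h0, smul_zero])
        exact ⟨hψsupp.1.of_isClosed_subset isClosed_closure (closure_mono hsub),
          (closure_mono hsub).trans hψsupp.2⟩
      have happ := hmin (fun x => ε • ψ x) (fun x i => ε • Dψ x i)
        (memW11_smul ε hψW) hεψ_int hsupp hint_ε
      exact ⟨hint_ε, happ⟩
    -- dominated convergence along difference quotients
    set D : EuclideanSpace ℝ (Fin n) → ℝ := fun x => fderiv ℝ (f x) (Du x) (Dψ x) with hD
    set ε : ℕ → ℝ := fun k => 1 / ((k:ℝ) + 1) with hε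
    have hεpos : ∀ k, 0 < ε k := fun k => by rw [hε]; positivity
    have hεle : ∀ k, ε k ≤ 1 := by
      intro k
      rw [hε, div_le_one (by positivity)]
      simp
    set G : ℕ → EuclideanSpace ℝ (Fin n) → ℝ :=
      fun k x => (f x (Du x + ε k • Dψ x) - f x (Du x)) / ε k with hG
    set B : EuclideanSpace ℝ (Fin n) → ℝ :=
      fun x => f x (Du x + (1:ℝ) • Dψ x) + 2 * f x (Du x)
        + f x (Du x + (-1:ℝ) • Dψ x) with hB
    have hB_int : Integrable B (volume.restrict Ω) := by
      rw [hB]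
      exact Integrable.add (Integrable.add (hsum_int 1 (Or.inl rfl)) (hFu.const_mul 2))
        (hsum_int (-1) (Or.inr rfl))
    have hG_meas : ∀ k, AEStronglyMeasurable (G k) (volume.restrict Ω) := by
      intro k
      rw [hG]
      have h1 := aesm_comp hf_meas hcont (hDu_aesm.add (hDψ_aesm.const_smul (ε k)))
      have h2 := aesm_comp hf_meas hcont hDu_aesm
      simp only [div_eq_mul_inv]
      exact (h1.sub h2).mul_const (ε k)⁻¹
    have hmono : ∀ᵐ x ∂(volume.restrict Ω), ∀ k, ‖G k x‖ ≤ B x := by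
      filter_upwards [hae] with x hx
      obtain ⟨hx0, hxc, hxd, hxg, hx3⟩ := hx
      intro k
      have hconvh : ConvexOn ℝ Set.univ (fun t : ℝ => f x (Du x + t • Dψ x)) := by
        have h1 := hxc.comp_affineMap (AffineMap.lineMap (Du x) (Du x + Dψ x))
        rw [Set.preimage_univ] at h1
        have h2 : (f x ∘ (AffineMap.lineMap (Du x) (Du x + Dψ x) : ℝ →ᵃ[ℝ] _))
            = fun t : ℝ => f x (Du x + t • Dψ x) := by
          funext t
          simp only [Function.comp_apply, AffineMap.lineMap_apply_module]
          congr 1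
          module
        rwa [h2] at h1
      have hup := hconvh.secant_mono (Set.mem_univ (0:ℝ)) (Set.mem_univ (ε k))
        (Set.mem_univ (1:ℝ)) (ne_of_gt (hεpos k)) one_ne_zero (hεle k)
      have hlo := hconvh.secant_mono (Set.mem_univ (0:ℝ)) (Set.mem_univ (-1:ℝ))
        (Set.mem_univ (ε k)) (by norm_num) (ne_of_gt (hεpos k))
        (by linarith [hεpos k])
      simp only [zero_smul, add_zero, sub_zero, div_one] at hup hlo
      have hlo' : f x (Du x) - f x (Du x + (-1:ℝ) • Dψ x)
          ≤ (f x (Du x + ε k • Dψ x) - f x (Du x)) / ε k := by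
        have heq : (f x (Du x + (-1:ℝ) • Dψ x) - f x (Du x)) / (-1:ℝ)
            = f x (Du x) - f x (Du x + (-1:ℝ) • Dψ x) := by ring
        rw [heq] at hlo
        exact hlo
      have hGk : G k x = (f x (Du x + ε k • Dψ x) - f x (Du x)) / ε k := by rw [hG]
      have hBx : B x = f x (Du x + (1:ℝ) • Dψ x) + 2 * f x (Du x)
          + f x (Du x + (-1:ℝ) • Dψ x) := by rw [hB]
      rw [hGk, hBx, Real.norm_eq_abs, abs_le]
      constructor
      · have h1 := hx0 (Du x + (1:ℝ) • Dψ x)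
        have h2 := hx0 (Du x)
        have h3 := hx0 (Du x + (-1:ℝ) • Dψ x)
        linarith
      · have h1 := hx0 (Du x + (1:ℝ) • Dψ x)
        have h2 := hx0 (Du x)
        have h3 := hx0 (Du x + (-1:ℝ) • Dψ x)
        linarith
    have hmono' : ∀ k, ∀ᵐ x ∂(volume.restrict Ω), ‖G k x‖ ≤ B x :=
      fun k => hmono.mono fun x hx => hx k
    have htε : Filter.Tendsto ε Filter.atTop (𝓝[≠] (0:ℝ)) := by
      apply tendsto_nhdsWithin_of_tendsto_nhds_of_eventually_within
      · rw [hε]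
        exact tendsto_one_div_add_atTop_nhds_zero_nat
      · exact Filter.Eventually.of_forall fun k =>
          Set.mem_compl_singleton_iff.mpr (ne_of_gt (hεpos k))
    have hconv_ae : ∀ᵐ x ∂(volume.restrict Ω),
        Filter.Tendsto (fun k => G k x) Filter.atTop (𝓝 (D x)) := by
      filter_upwards [hae] with x hx
      obtain ⟨hx0, hxc, hxd, hxg, hx3⟩ := hx
      have h0 : Du x + (0:ℝ) • Dψ x = Du x := by simp
      have hdf : HasFDerivAt (f x) (fderiv ℝ (f x) (Du x)) (Du x + (0:ℝ) • Dψ x) := by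
        rw [h0]
        exact (hxd.differentiable one_ne_zero (Du x)).hasFDerivAt
      have hline : HasDerivAt (fun t : ℝ => Du x + t • Dψ x) (Dψ x) 0 := by
        simpa using ((hasDerivAt_id (0:ℝ)).smul_const (Dψ x)).const_add (Du x)
      have hcomp : HasDerivAt (fun t : ℝ => f x (Du x + t • Dψ x)) (D x) 0 := by
        have := hdf.comp_hasDerivAt 0 hline
        exact this
      have hslope := hasDerivAt_iff_tendsto_slope.mp hcomp
      have htt := hslope.comp htε
      refine htt.congr fun k => ?_
      simp only [Function.comp_apply, slope_def_field, hG]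
      rw [sub_zero, zero_smul, add_zero]
    have htend := tendsto_integral_of_dominated_convergence B hG_meas hB_int hmono' hconv_ae
    have hGk_nonneg : ∀ k, 0 ≤ ∫ x in Ω, G k x := by
      intro k
      obtain ⟨hint_ε, hle⟩ := hmin' (ε k) (hεpos k) (hεle k)
      have heq : ∫ x in Ω, G k x
          = ((∫ x in Ω, f x (Du x + ε k • Dψ x)) - ∫ x in Ω, f x (Du x)) / ε k := by
        rw [hG]
        rw [integral_div]
        rw [integral_sub hint_ε hFu]
      rw [heq]
      exact div_nonneg (sub_nonneg.mpr hle) (le_of_lt (hεpos k))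
    have hD_aesm : AEStronglyMeasurable D (volume.restrict Ω) :=
      aestronglyMeasurable_of_tendsto_ae Filter.atTop hG_meas hconv_ae
    have hD_bound : ∀ᵐ x ∂(volume.restrict Ω), ‖D x‖ ≤ B x := by
      filter_upwards [hmono, hconv_ae] with x hx hlim
      exact le_of_tendsto hlim.norm (Filter.Eventually.of_forall hx)
    have hD_int : Integrable D (volume.restrict Ω) :=
      Integrable.mono' hB_int hD_aesm hD_bound
    exact ⟨hD_int, ge_of_tendsto htend (Filter.Eventually.of_forall hGk_nonneg)⟩
  -- apply the key step with `φ` and `-φ`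
  have hKφ := key φ Dφ hφ hφF hφsupp
  have hφFneg : IntegrableOn (fun x => f x (fun i => (-1:ℝ) • Dφ x i)) Ω volume := by
    refine hφF.congr ?_
    filter_upwards [hgf] with x hx
    rw [hx, hx]
    congr 1
    funext i
    simp
  have hsuppneg : CptSuppIn Ω (fun x => (-1:ℝ) • φ x) := by
    have hsub : Function.support (fun x => (-1:ℝ) • φ x) ⊆ Function.support φ := by
      intro x hx
      simp only [Function.mem_support] at hx ⊢
      intro h0; exact hx (by rw [h0, smul_zero])
    exact ⟨hφsupp.1.of_isClosed_subset isClosed_closure (closure_mono hsub),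
      (closure_mono hsub).trans hφsupp.2⟩
  have hKneg := key (fun x => (-1:ℝ) • φ x) (fun x i => (-1:ℝ) • Dφ x i)
    (memW11_smul (-1) hφ) hφFneg hsuppneg
  have hDneg : (fun x => fderiv ℝ (f x) (Du x) (fun i => (-1:ℝ) • Dφ x i))
      = fun x => - fderiv ℝ (f x) (Du x) (Dφ x) := by
    funext x
    have hneg : (fun i => (-1:ℝ) • Dφ x i) = -(Dφ x) := by funext i; simp
    rw [hneg, map_neg]
  have hzero : ∫ x in Ω, fderiv ℝ (f x) (Du x) (Dφ x) = 0 := by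
    have h1 := hKφ.2
    have h2 := hKneg.2
    rw [hDneg] at h2
    rw [integral_neg] at h2
    linarith
  have hfun : (fun x => ∑ i, ∑ α,
      fderiv ℝ (f x) (Du x) (Pi.single i (EuclideanSpace.single α (1:ℝ))) * Dφ x i α)
      = fun x => fderiv ℝ (f x) (Du x) (Dφ x) :=
    funext fun x => clm_expand (fderiv ℝ (f x) (Du x)) (Dφ x)
  constructor
  · show IntegrableOn _ Ω volume
    rw [hfun]
    exact hKφ.1
  · rw [show (∫ x in Ω, (∑ i, ∑ α,
      fderiv ℝ (f x) (Du x) (Pi.single i (EuclideanSpace.single α (1:ℝ))) * Dφ x i α))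
      = ∫ x in Ω, fderiv ℝ (f x) (Du x) (Dφ x) from by rw [hfun]]
    exact hzero


end
end
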